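/- arXiv:2403.04658 — 3 statements merged into one kernel-verified Lean document; each statement's English description precedes it below -/
import Mathlib

section
/- Let b be a geometric structure on ℝⁿ with geometric pair (b, B). Then the following are equivalent: (1) for every f ∈ 𝒮(ℝⁿ) and every x ∈ ℝⁿ, (𝓕ᴸ_b (𝓕ᴸ_b f))(x) = |det B| · f(x); (2) n is even and b is skew-symmetric, i.e. b(x, y) = -b(y, x) for all x, y ∈ ℝⁿ (i.e. b is a symplectic structure). The same equivalence holds with 𝓕ᴿ_b in place of 𝓕ᴸ_b. -/
open MeasureTheory Complex
open scoped RealInnerProductSpace FourierTransform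

noncomputable section

/-- The left Fourier transform associated to a bilinear form `b` on `ℝⁿ`:
`(𝓕ᴸ_b f)(ξ) = ∫ e^{-2πi b(ξ,x)} f(x) dx`. -/
def fourierL {n : ℕ} (b : EuclideanSpace ℝ (Fin n) →ₗ[ℝ] EuclideanSpace ℝ (Fin n) →ₗ[ℝ] ℝ)
    (f : EuclideanSpace ℝ (Fin n) → ℂ) (ξ : EuclideanSpace ℝ (Fin n)) : ℂ :=
  ∫ x : EuclideanSpace ℝ (Fin n),
    Complex.exp (-(2 * Real.pi * Complex.I) * (b ξ x : ℂ)) * f x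

/-- The right Fourier transform associated to a bilinear form `b` on `ℝⁿ`:
`(𝓕ᴿ_b f)(ξ) = ∫ e^{-2πi b(x,ξ)} f(x) dx`. -/
def fourierR {n : ℕ} (b : EuclideanSpace ℝ (Fin n) →ₗ[ℝ] EuclideanSpace ℝ (Fin n) →ₗ[ℝ] ℝ)
    (f : EuclideanSpace ℝ (Fin n) → ℂ) (ξ : EuclideanSpace ℝ (Fin n)) : ℂ :=
  ∫ x : EuclideanSpace ℝ (Fin n),
    Complex.exp (-(2 * Real.pi * Complex.I) * (b x ξ : ℂ)) * f x

/-!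
Write `b x y = ⟪x, C y⟫` with `C = B⁻¹`. Then `𝓕ᴿ_b g = 𝓕 g ∘ C`, and `𝓕ᴸ_b = 𝓕ᴿ_{bᵀ}` with
`bᵀ` represented by `Cᵀ`. For invertible `A`, a linear change of variables and Fourier inversion
give `𝓕 (𝓕 f ∘ A) (Aᵀ w) = |det A|⁻¹ f (-w)`; since Schwartz functions separate points,
`𝓕 (𝓕 f ∘ A) ∘ A = |det A|⁻¹ f` for all `f` exactly when `A x = Aᵀ (-x)` for all `x`, i.e. when
`A` is skew-adjoint, i.e. when `b` is skew-symmetric. Finally an invertible skew-adjoint `A` has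
`det A = det Aᵀ = (-1)ⁿ det A`, so `n` is even.
-/

open scoped SchwartzMap
open LinearMap (adjoint)

section LinearAlgebra

variable {V : Type*} [NormedAddCommGroup V] [InnerProductSpace ℝ V] [FiniteDimensional ℝ V]

theorem LinearMap.det_adjoint (A : V →ₗ[ℝ] V) : (adjoint A).det = A.det := by
  let v := (stdOrthonormalBasis ℝ V).toBasis
  rw [← LinearMap.det_toMatrix v, ← LinearMap.det_toMatrix v, LinearMap.toMatrix_adjoint,
    Matrix.det_conjTranspose, star_trivial]

theorem LinearMap.surjective_adjoint_of_det_ne_zero {A : V →ₗ[ℝ] V} (hA : A.det ≠ 0) :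
    Function.Surjective (adjoint A) :=
  ((Module.End.isUnit_iff _).1 <| (LinearMap.isUnit_iff_isUnit_det _).2 <|
    isUnit_iff_ne_zero.2 <| by rwa [LinearMap.det_adjoint]).2

theorem LinearMap.even_finrank_of_adjoint_eq_neg {A : V →ₗ[ℝ] V} (hA : A.det ≠ 0)
    (h : adjoint A = -A) : Even (Module.finrank ℝ V) := by
  have hdet : A.det = (-1) ^ Module.finrank ℝ V * A.det := by
    conv_lhs => rw [← LinearMap.det_adjoint, h, ← neg_one_smul ℝ A, LinearMap.det_smul]
  have : (-1 : ℝ) ^ Module.finrank ℝ V = 1 :=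
    (mul_eq_right₀ hA).1 hdet.symm
  exact (neg_one_pow_eq_one_iff_even (by norm_num)).1 this

theorem LinearMap.adjoint_eq_neg_iff_of_eq_inner {b : V →ₗ[ℝ] V →ₗ[ℝ] ℝ} {A : V →ₗ[ℝ] V}
    (hbA : ∀ x y, b x y = ⟪x, A y⟫) :
    adjoint A = -A ↔ ∀ x y, b x y = -b y x := by
  rw [eq_comm, LinearMap.eq_adjoint_iff]
  simp only [hbA, LinearMap.neg_apply, inner_neg_left, real_inner_comm (A _), eq_comm]

theorem LinearMap.flip_apply_eq_inner_adjoint {b : V →ₗ[ℝ] V →ₗ[ℝ] ℝ} {A : V →ₗ[ℝ] V}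
    (hbA : ∀ x y, b x y = ⟪x, A y⟫) (x y : V) :
    b.flip x y = ⟪x, adjoint A y⟫ := by
  rw [LinearMap.adjoint_inner_right, real_inner_comm, LinearMap.flip_apply, hbA]

end LinearAlgebra

theorem MeasureTheory.Measure.integral_comp_linearMap {V E : Type*} [NormedAddCommGroup V]
    [NormedSpace ℝ V] [MeasurableSpace V] [BorelSpace V] [FiniteDimensional ℝ V]
    [NormedAddCommGroup E] [NormedSpace ℝ E] (μ : Measure V) [μ.IsAddHaarMeasure]
    {A : V →ₗ[ℝ] V} (hA : A.det ≠ 0) (g : V → E) :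
    ∫ x, g (A x) ∂μ = |A.det|⁻¹ • ∫ y, g y ∂μ := by
  let e : V ≃ᵐ V :=
    (A.equivOfDetNeZero hA).toContinuousLinearEquiv.toHomeomorph.toMeasurableEquiv
  have hmap : μ.map e = ENNReal.ofReal |A.det⁻¹| • μ :=
    Measure.map_linearMap_addHaar_eq_smul_addHaar μ hA
  rw [← abs_inv, ← ENNReal.toReal_ofReal (abs_nonneg A.det⁻¹), ← integral_smul_measure, ← hmap,
    integral_map_equiv]
  rfl

theorem SchwartzMap.eq_of_forall_apply_eq {V F : Type*} [NormedAddCommGroup V] [NormedSpace ℝ V]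
    [FiniteDimensional ℝ V] [NormedAddCommGroup F] [NormedSpace ℝ F] [Nontrivial F] {v w : V}
    (h : ∀ f : 𝓢(V, F), f v = f w) : v = w := by
  by_contra hvw
  have hd : 0 < dist w v := dist_pos.2 (Ne.symm hvw)
  obtain ⟨c, hc⟩ := exists_ne (0 : F)
  let φ : ContDiffBump v := ⟨dist w v / 2, dist w v, by positivity, by linarith⟩
  let f : 𝓢(V, F) := (φ.hasCompactSupport.smul_right (f' := fun _ ↦ c)).toSchwartzMap
    (φ.contDiff.smul contDiff_const)
  have hv : f v = c := by
    simp [f, φ.one_of_mem_closedBall (Metric.mem_closedBall_self (by positivity))]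
  have hw : f w = 0 := by
    simp [f, φ.zero_of_le_dist le_rfl]
  exact hc (hv.symm.trans ((h f).trans hw))

section Fourier

variable {V E : Type*} [NormedAddCommGroup V] [InnerProductSpace ℝ V] [FiniteDimensional ℝ V]
  [MeasurableSpace V] [BorelSpace V] [NormedAddCommGroup E] [NormedSpace ℂ E]

theorem Real.fourier_comp_linearMap {A : V →ₗ[ℝ] V} (hA : A.det ≠ 0) (f : V → E) (w : V) :
    𝓕 (f ∘ A) (adjoint A w) = |A.det|⁻¹ • 𝓕 f w := by
  simp only [Real.fourier_eq, Function.comp_apply, LinearMap.adjoint_inner_right]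
  exact Measure.integral_comp_linearMap volume hA (fun u ↦ 𝐞 (-⟪u, w⟫) • f u)

theorem SchwartzMap.fourier_fourier_apply [CompleteSpace E] (f : 𝓢(V, E)) (x : V) :
    𝓕 (𝓕 (f : V → E)) x = f (-x) := by
  rw [← neg_neg x, ← Real.fourierInv_eq_fourier_neg, neg_neg,
    f.continuous.fourierInv_fourier_eq f.integrable (𝓕 f).integrable]

theorem SchwartzMap.fourier_comp_fourier_comp_eq_iff [CompleteSpace E] [Nontrivial E]
    {A : V →ₗ[ℝ] V} (hA : A.det ≠ 0) :
    (∀ (f : 𝓢(V, E)) (x : V), 𝓕 (𝓕 (f : V → E) ∘ A) (A x) = |A.det|⁻¹ • f x) ↔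
      adjoint A = -A := by
  constructor
  · intro H
    ext x
    obtain ⟨w, hw⟩ := LinearMap.surjective_adjoint_of_det_ne_zero hA (A x)
    have hwx : -w = x := SchwartzMap.eq_of_forall_apply_eq fun f ↦ by
      have := H f x
      rwa [← hw, Real.fourier_comp_linearMap hA, SchwartzMap.fourier_fourier_apply,
        smul_right_inj (by positivity)] at this
    rw [LinearMap.neg_apply, ← hw, ← map_neg, hwx]
  · intro h f x
    have hx : A x = adjoint A (-x) := by rw [map_neg, h, LinearMap.neg_apply, neg_neg]
    rw [hx, Real.fourier_comp_linearMap hA, SchwartzMap.fourier_fourier_apply, neg_neg]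

end Fourier

section EuclideanSpace

variable {n : ℕ}

local notation "E" => EuclideanSpace ℝ (Fin n)

theorem fourierR_eq_fourier_comp {b : E →ₗ[ℝ] E →ₗ[ℝ] ℝ} {A : E →ₗ[ℝ] E}
    (hbA : ∀ x y, b x y = ⟪x, A y⟫) (g : E → ℂ) : fourierR b g = 𝓕 g ∘ A := by
  ext ξ
  simp only [fourierR, Function.comp_apply, Real.fourier_eq', hbA, smul_eq_mul]
  congr 1 with x
  congr 2
  push_cast
  ring

theorem fourierR_fourierR_eq_iff {b : E →ₗ[ℝ] E →ₗ[ℝ] ℝ} {A : E →ₗ[ℝ] E} (hA : A.det ≠ 0)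
    (hbA : ∀ x y, b x y = ⟪x, A y⟫) :
    (∀ (f : 𝓢(E, ℂ)) (x : E), fourierR b (fourierR b ⇑f) x = ((|A.det|⁻¹ : ℝ) : ℂ) * f x) ↔
      Even n ∧ ∀ x y, b x y = -b y x := by
  simp only [fourierR_eq_fourier_comp hbA, Function.comp_apply, ← Complex.real_smul]
  rw [SchwartzMap.fourier_comp_fourier_comp_eq_iff hA]
  refine ⟨fun h ↦ ⟨?_, (LinearMap.adjoint_eq_neg_iff_of_eq_inner hbA).1 h⟩,
    fun h ↦ (LinearMap.adjoint_eq_neg_iff_of_eq_inner hbA).2 h.2⟩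
  simpa using LinearMap.even_finrank_of_adjoint_eq_neg hA h

end EuclideanSpace

theorem stmt3_general {n : ℕ}
    (b : EuclideanSpace ℝ (Fin n) →ₗ[ℝ] EuclideanSpace ℝ (Fin n) →ₗ[ℝ] ℝ)
    (B : EuclideanSpace ℝ (Fin n) ≃ₗ[ℝ] EuclideanSpace ℝ (Fin n))
    (hpair : ∀ x y : EuclideanSpace ℝ (Fin n), ⟪x, y⟫ = b x (B y)) :
    ((∀ f : SchwartzMap (EuclideanSpace ℝ (Fin n)) ℂ, ∀ x : EuclideanSpace ℝ (Fin n),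
        fourierL b (fourierL b ⇑f) x =
          ((|LinearMap.det (B : EuclideanSpace ℝ (Fin n) →ₗ[ℝ] EuclideanSpace ℝ (Fin n))| : ℝ) : ℂ)
            * f x) ↔
      (Even n ∧ ∀ x y : EuclideanSpace ℝ (Fin n), b x y = - b y x)) ∧
    ((∀ f : SchwartzMap (EuclideanSpace ℝ (Fin n)) ℂ, ∀ x : EuclideanSpace ℝ (Fin n),
        fourierR b (fourierR b ⇑f) x =
          ((|LinearMap.det (B : EuclideanSpace ℝ (Fin n) →ₗ[ℝ] EuclideanSpace ℝ (Fin n))| : ℝ) : ℂ)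
            * f x) ↔
      (Even n ∧ ∀ x y : EuclideanSpace ℝ (Fin n), b x y = - b y x)) := by
  set C : EuclideanSpace ℝ (Fin n) →ₗ[ℝ] EuclideanSpace ℝ (Fin n) := B.symm.toLinearMap
  have hbC : ∀ x y, b x y = ⟪x, C y⟫ := fun x y ↦ by
    simpa [C] using (hpair x (B.symm y)).symm
  have hC : C.det ≠ 0 := (LinearEquiv.isUnit_det' B.symm).ne_zero
  have hdet : |C.det|⁻¹ = |(B : EuclideanSpace ℝ (Fin n) →ₗ[ℝ] _).det| := by
    rw [LinearEquiv.det_coe_symm, abs_inv, inv_inv]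
  have hskew_flip : (∀ x y, b.flip x y = -b.flip y x) ↔ ∀ x y, b x y = -b y x := by
    simp only [LinearMap.flip_apply]
    exact forall_comm
  refine ⟨?_, hdet ▸ fourierR_fourierR_eq_iff hC hbC⟩
  rw [show fourierL b = fourierR b.flip from rfl, ← hdet, ← LinearMap.det_adjoint, ← hskew_flip]
  exact fourierR_fourierR_eq_iff (by rwa [LinearMap.det_adjoint])
    (LinearMap.flip_apply_eq_inner_adjoint hbC)

/-- `𝓕ᴸ_b ∘ 𝓕ᴸ_b = |det B| · id` on Schwartz functions iff `n` is even and
`b` is skew-symmetric (i.e. symplectic); and the same with `𝓕ᴿ_b`. -/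
theorem stmt3 {n : ℕ} (hn : 1 ≤ n)
    (b : EuclideanSpace ℝ (Fin n) →ₗ[ℝ] EuclideanSpace ℝ (Fin n) →ₗ[ℝ] ℝ)
    (hb : ∀ x : EuclideanSpace ℝ (Fin n), (∀ y, b x y = 0) → x = 0)
    (B : EuclideanSpace ℝ (Fin n) ≃ₗ[ℝ] EuclideanSpace ℝ (Fin n))
    (hpair : ∀ x y : EuclideanSpace ℝ (Fin n), ⟪x, y⟫ = b x (B y)) :
    ((∀ f : SchwartzMap (EuclideanSpace ℝ (Fin n)) ℂ, ∀ x : EuclideanSpace ℝ (Fin n),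
        fourierL b (fourierL b ⇑f) x =
          ((|LinearMap.det (B : EuclideanSpace ℝ (Fin n) →ₗ[ℝ] EuclideanSpace ℝ (Fin n))| : ℝ) : ℂ)
            * f x) ↔
      (Even n ∧ ∀ x y : EuclideanSpace ℝ (Fin n), b x y = - b y x)) ∧
    ((∀ f : SchwartzMap (EuclideanSpace ℝ (Fin n)) ℂ, ∀ x : EuclideanSpace ℝ (Fin n),
        fourierR b (fourierR b ⇑f) x =
          ((|LinearMap.det (B : EuclideanSpace ℝ (Fin n) →ₗ[ℝ] EuclideanSpace ℝ (Fin n))| : ℝ) : ℂ)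
            * f x) ↔
      (Even n ∧ ∀ x y : EuclideanSpace ℝ (Fin n), b x y = - b y x)) :=
  stmt3_general b B hpair
end
end

section
/- Let b be a geometric structure on ℝⁿ with geometric pair (b, B). Then for every f ∈ 𝒮(ℝⁿ) and every m ∈ ℕ: ∫_{ℝⁿ} |(Δ_b^m f)(x)|² dx = (2π)^{4m} · |det B|⁻¹ · ∫_{ℝⁿ} b(ξ,ξ)^{2m} · |(𝓕ᴸ_b f)(ξ)|² dξ, and the same identity holds with 𝓕ᴿ_b in place of 𝓕ᴸ_b. -/
open MeasureTheory Complex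
open scoped RealInnerProductSpace FourierTransform

noncomputable section

/-- The `b`-Laplace operator `Δ_b g = Σ_{k,l} b_{kl} ∂_k ∂_l g`, where
`b_{kl} = ⟪e_k, B e_l⟫` are the entries of the matrix of `B` in the canonical basis. -/
def bLap {n : ℕ} (B : EuclideanSpace ℝ (Fin n) ≃ₗ[ℝ] EuclideanSpace ℝ (Fin n))
    (g : EuclideanSpace ℝ (Fin n) → ℂ) (x : EuclideanSpace ℝ (Fin n)) : ℂ :=
  ∑ k : Fin n, ∑ l : Fin n,
    ((⟪EuclideanSpace.single k (1 : ℝ), B (EuclideanSpace.single l (1 : ℝ))⟫ : ℝ) : ℂ) *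
      fderiv ℝ (fun y => fderiv ℝ g y (EuclideanSpace.single l (1 : ℝ))) x
        (EuclideanSpace.single k (1 : ℝ))

/-!
Under the Fourier transform each `∂_k` becomes multiplication by `2πiξ_k`, so
`𝓕(Δ_b^m f)(ξ) = (-4π²⟪ξ, Bξ⟫)^m 𝓕f(ξ)` and Plancherel gives
`∫ |Δ_b^m f|² = (2π)^{4m} ∫ ⟪ξ, Bξ⟫^{2m} |𝓕f(ξ)|² dξ`.
Since `b(x, Bη) = ⟪x, η⟫` and `b(Bᵀη, x) = ⟪η, x⟫`, we have `𝓕ᴿ_b f ∘ B = 𝓕f = 𝓕ᴸ_b f ∘ Bᵀ`, while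
`b(Bη, Bη) = b(Bᵀη, Bᵀη) = ⟪Bη, η⟫`; the linear substitutions `ξ = Bη` and `ξ = Bᵀη` then
produce the factor `|det B| = |det Bᵀ|`.
-/

open LineDeriv

theorem MeasureTheory.Measure.integral_eq_abs_det_smul_integral_comp {E F : Type*}
    [NormedAddCommGroup E] [NormedSpace ℝ E] [MeasurableSpace E] [BorelSpace E]
    [FiniteDimensional ℝ E] [NormedAddCommGroup F] [NormedSpace ℝ F] (μ : Measure E)
    [μ.IsAddHaarMeasure] {T : E →ₗ[ℝ] E} (hT : LinearMap.det T ≠ 0) (g : E → F) :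
    ∫ x, g x ∂μ = |LinearMap.det T| • ∫ x, g (T x) ∂μ := by
  let e := (T.equivOfDetNeZero hT).toContinuousLinearEquiv.toHomeomorph.toMeasurableEquiv
  calc ∫ x, g x ∂μ = |LinearMap.det T| • ∫ x, g x ∂(μ.map e) := by
        rw [show ⇑e = ⇑T from rfl, Measure.map_linearMap_addHaar_eq_smul_addHaar μ hT,
          integral_smul_measure, ENNReal.toReal_ofReal (abs_nonneg _), abs_inv,
          smul_inv_smul₀ (abs_ne_zero.2 hT)]
    _ = |LinearMap.det T| • ∫ x, g (T x) ∂μ := by rw [integral_map_equiv e g]; rfl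

theorem LinearMap.det_adjoint_s16 {E : Type*} [NormedAddCommGroup E] [InnerProductSpace ℝ E]
    [FiniteDimensional ℝ E] (T : E →ₗ[ℝ] E) :
    LinearMap.det (LinearMap.adjoint T) = LinearMap.det T := by
  let v := stdOrthonormalBasis ℝ E
  rw [← LinearMap.det_toMatrix v.toBasis, ← LinearMap.det_toMatrix v.toBasis T,
    LinearMap.toMatrix_adjoint, Matrix.det_conjTranspose, star_trivial]

theorem OrthonormalBasis.inner_map_self_eq_sum {ι V F : Type*} [Fintype ι]
    [NormedAddCommGroup V] [InnerProductSpace ℝ V] [FunLike F V V] [LinearMapClass F ℝ V V]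
    (e : OrthonormalBasis ι ℝ V) (T : F) (ξ : V) :
    ⟪ξ, T ξ⟫ = ∑ k, ∑ l, ⟪e k, T (e l)⟫ * (⟪ξ, e k⟫ * ⟪ξ, e l⟫) := by
  have hT : ∀ k, ⟪e k, T ξ⟫ = ∑ l, ⟪ξ, e l⟫ * ⟪e k, T (e l)⟫ := fun k => by
    conv_lhs => rw [← e.sum_repr' ξ]
    simp [inner_sum, inner_smul_right, real_inner_comm]
  rw [← e.sum_inner_mul_inner ξ (T ξ)]
  simp only [hT, Finset.mul_sum]
  exact Finset.sum_congr rfl fun k _ => Finset.sum_congr rfl fun l _ => by ring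

theorem apply_adjoint_left_of_inner_eq {V : Type*} [NormedAddCommGroup V]
    [InnerProductSpace ℝ V] [FiniteDimensional ℝ V] {b : V →ₗ[ℝ] V →ₗ[ℝ] ℝ} {B : V ≃ₗ[ℝ] V}
    (hpair : ∀ x y : V, ⟪x, y⟫ = b x (B y)) (η x : V) :
    b (LinearMap.adjoint (B : V →ₗ[ℝ] V) η) x = ⟪η, x⟫ := by
  rw [← B.apply_symm_apply x, ← hpair, LinearMap.adjoint_inner_left, LinearEquiv.coe_coe,
    B.apply_symm_apply]

theorem SchwartzMap.fourier_lineDerivOp_apply {V E : Type*} [NormedAddCommGroup V]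
    [InnerProductSpace ℝ V] [FiniteDimensional ℝ V] [MeasurableSpace V] [BorelSpace V]
    [NormedAddCommGroup E] [NormedSpace ℂ E] (f : SchwartzMap V E) (v ξ : V) :
    𝓕 ⇑(∂_{v} f : SchwartzMap V E) ξ = (2 * Real.pi * I * ⟪ξ, v⟫) • 𝓕 ⇑f ξ := by
  have hv : (fun x : V => ⟪x, v⟫).HasTemperateGrowth := ((innerSL ℝ).flip v).hasTemperateGrowth
  rw [← SchwartzMap.fourier_coe, SchwartzMap.fourier_lineDerivOp_eq]
  simp [hv, SchwartzMap.fourier_coe, mul_smul]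

section EuclideanSpace

variable {n : ℕ}

local notation "𝓔" => EuclideanSpace ℝ (Fin n)

def bLapSchwartz (B : 𝓔 ≃ₗ[ℝ] 𝓔) (f : SchwartzMap 𝓔 ℂ) : SchwartzMap 𝓔 ℂ :=
  ∑ k : Fin n, ∑ l : Fin n,
    ((⟪EuclideanSpace.single k (1 : ℝ), B (EuclideanSpace.single l (1 : ℝ))⟫ : ℝ) : ℂ) •
      ∂_{EuclideanSpace.single k (1 : ℝ)} (∂_{EuclideanSpace.single l (1 : ℝ)} f)

theorem coe_bLapSchwartz (B : 𝓔 ≃ₗ[ℝ] 𝓔) (f : SchwartzMap 𝓔 ℂ) :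
    ⇑(bLapSchwartz B f) = bLap B ⇑f := by
  ext x
  simp only [bLapSchwartz, bLap, sum_apply, smul_apply, smul_eq_mul]
  rfl

theorem coe_iterate_bLapSchwartz (B : 𝓔 ≃ₗ[ℝ] 𝓔) (f : SchwartzMap 𝓔 ℂ) (m : ℕ) :
    ⇑((bLapSchwartz B)^[m] f) = (bLap B)^[m] ⇑f := by
  induction m with
  | zero => rfl
  | succ m ih => rw [Function.iterate_succ_apply', Function.iterate_succ_apply',
      coe_bLapSchwartz, ih]

theorem fourier_bLapSchwartz_apply (B : 𝓔 ≃ₗ[ℝ] 𝓔) (f : SchwartzMap 𝓔 ℂ) (ξ : 𝓔) :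
    𝓕 ⇑(bLapSchwartz B f) ξ = ((-((2 * Real.pi) ^ 2) * ⟪ξ, B ξ⟫ : ℝ) : ℂ) * 𝓕 ⇑f ξ := by
  have hterm : ∀ k l : Fin n, 𝓕 ⇑(∂_{EuclideanSpace.single k (1 : ℝ)}
      (∂_{EuclideanSpace.single l (1 : ℝ)} f) : SchwartzMap 𝓔 ℂ) ξ =
      ((-((2 * Real.pi) ^ 2) * (ξ k * ξ l) : ℝ) : ℂ) * 𝓕 ⇑f ξ := fun k l => by
    rw [SchwartzMap.fourier_lineDerivOp_apply, SchwartzMap.fourier_lineDerivOp_apply]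
    simp only [EuclideanSpace.inner_single_right, conj_trivial, smul_eq_mul]
    push_cast
    linear_combination (4 * Real.pi ^ 2 * ξ k * ξ l * 𝓕 ⇑f ξ) * I_sq
  rw [← SchwartzMap.fourier_coe, (EuclideanSpace.basisFun (Fin n) ℝ).inner_map_self_eq_sum]
  simp only [bLapSchwartz, FourierTransform.fourier_sum, FourierTransform.fourier_smul,
    sum_apply, smul_apply, SchwartzMap.fourier_coe, hterm,
    EuclideanSpace.basisFun_apply, EuclideanSpace.inner_single_right, conj_trivial, smul_eq_mul]
  push_cast
  simp only [Finset.mul_sum, Finset.sum_mul]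
  exact Finset.sum_congr rfl fun k _ => Finset.sum_congr rfl fun l _ => by ring

theorem fourier_iterate_bLapSchwartz_apply (B : 𝓔 ≃ₗ[ℝ] 𝓔) (f : SchwartzMap 𝓔 ℂ) (m : ℕ)
    (ξ : 𝓔) :
    𝓕 ⇑((bLapSchwartz B)^[m] f) ξ = ((-((2 * Real.pi) ^ 2) * ⟪ξ, B ξ⟫ : ℝ) : ℂ) ^ m * 𝓕 ⇑f ξ := by
  induction m with
  | zero => simp
  | succ m ih => rw [Function.iterate_succ_apply', fourier_bLapSchwartz_apply, ih, ← mul_assoc,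
      ← pow_succ']

theorem integral_norm_sq_iterate_bLap (B : 𝓔 ≃ₗ[ℝ] 𝓔) (f : SchwartzMap 𝓔 ℂ) (m : ℕ) :
    ∫ x, ‖(bLap B)^[m] ⇑f x‖ ^ 2 =
      (2 * Real.pi) ^ (4 * m) * ∫ ξ, ⟪ξ, B ξ⟫ ^ (2 * m) * ‖𝓕 ⇑f ξ‖ ^ 2 := by
  rw [← coe_iterate_bLapSchwartz, ← SchwartzMap.integral_norm_sq_fourier, ← integral_const_mul]
  congr 1 with ξ
  rw [SchwartzMap.fourier_coe, fourier_iterate_bLapSchwartz_apply, norm_mul, norm_pow, norm_real,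
    Real.norm_eq_abs, mul_pow, ← pow_mul, mul_comm m 2, pow_mul, sq_abs, pow_mul _ 4, pow_mul _ 2]
  ring

variable {b : EuclideanSpace ℝ (Fin n) →ₗ[ℝ] EuclideanSpace ℝ (Fin n) →ₗ[ℝ] ℝ}
  {B : EuclideanSpace ℝ (Fin n) ≃ₗ[ℝ] EuclideanSpace ℝ (Fin n)}

theorem fourierR_apply_map (hpair : ∀ x y : 𝓔, ⟪x, y⟫ = b x (B y)) (f : 𝓔 → ℂ) (η : 𝓔) :
    fourierR b f (B η) = 𝓕 f η := by
  rw [Real.fourier_eq', fourierR]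
  congr 1
  funext x
  rw [← hpair, smul_eq_mul]
  push_cast
  congr 2
  ring

theorem fourierL_apply_adjoint (hpair : ∀ x y : 𝓔, ⟪x, y⟫ = b x (B y)) (f : 𝓔 → ℂ) (η : 𝓔) :
    fourierL b f (LinearMap.adjoint (𝕜 := ℝ) (B : 𝓔 →ₗ[ℝ] 𝓔) η) = 𝓕 f η := by
  rw [Real.fourier_eq', fourierL]
  congr 1
  funext x
  rw [apply_adjoint_left_of_inner_eq hpair, real_inner_comm, smul_eq_mul]
  push_cast
  congr 2
  ring

theorem integral_pow_mul_norm_sq_fourierR (hpair : ∀ x y : 𝓔, ⟪x, y⟫ = b x (B y))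
    (f : 𝓔 → ℂ) (k : ℕ) :
    ∫ ξ, b ξ ξ ^ k * ‖fourierR b f ξ‖ ^ 2 =
      |LinearMap.det (B : 𝓔 →ₗ[ℝ] 𝓔)| * ∫ ξ, ⟪ξ, B ξ⟫ ^ k * ‖𝓕 f ξ‖ ^ 2 := by
  have hdet : LinearMap.det (B : 𝓔 →ₗ[ℝ] 𝓔) ≠ 0 := B.isUnit_det'.ne_zero
  have hsubst : ∀ η, b (B η) (B η) ^ k * ‖fourierR b f (B η)‖ ^ 2 = ⟪η, B η⟫ ^ k * ‖𝓕 f η‖ ^ 2 :=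
    fun η => by rw [← hpair, fourierR_apply_map hpair, real_inner_comm]
  rw [Measure.integral_eq_abs_det_smul_integral_comp volume hdet, smul_eq_mul]
  simp only [LinearEquiv.coe_coe, hsubst]

theorem integral_pow_mul_norm_sq_fourierL (hpair : ∀ x y : 𝓔, ⟪x, y⟫ = b x (B y))
    (f : 𝓔 → ℂ) (k : ℕ) :
    ∫ ξ, b ξ ξ ^ k * ‖fourierL b f ξ‖ ^ 2 =
      |LinearMap.det (B : 𝓔 →ₗ[ℝ] 𝓔)| * ∫ ξ, ⟪ξ, B ξ⟫ ^ k * ‖𝓕 f ξ‖ ^ 2 := by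
  set A := LinearMap.adjoint (𝕜 := ℝ) (B : 𝓔 →ₗ[ℝ] 𝓔)
  have hdet : LinearMap.det A ≠ 0 := by
    rw [LinearMap.det_adjoint_s16]
    exact B.isUnit_det'.ne_zero
  have hsubst : ∀ η, b (A η) (A η) ^ k * ‖fourierL b f (A η)‖ ^ 2 = ⟪η, B η⟫ ^ k * ‖𝓕 f η‖ ^ 2 :=
    fun η => by rw [apply_adjoint_left_of_inner_eq hpair, LinearMap.adjoint_inner_right,
      fourierL_apply_adjoint hpair, real_inner_comm, LinearEquiv.coe_coe]
  rw [Measure.integral_eq_abs_det_smul_integral_comp volume hdet, smul_eq_mul,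
    LinearMap.det_adjoint_s16]
  simp only [hsubst]

end EuclideanSpace

theorem stmt16_general {n : ℕ}
    (b : EuclideanSpace ℝ (Fin n) →ₗ[ℝ] EuclideanSpace ℝ (Fin n) →ₗ[ℝ] ℝ)
    (B : EuclideanSpace ℝ (Fin n) ≃ₗ[ℝ] EuclideanSpace ℝ (Fin n))
    (hpair : ∀ x y : EuclideanSpace ℝ (Fin n), ⟪x, y⟫ = b x (B y))
    (f : SchwartzMap (EuclideanSpace ℝ (Fin n)) ℂ) (m : ℕ) :
    (∫ x : EuclideanSpace ℝ (Fin n), ‖(bLap B)^[m] ⇑f x‖ ^ 2 =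
        (2 * Real.pi) ^ (4 * m) *
          |LinearMap.det (B : EuclideanSpace ℝ (Fin n) →ₗ[ℝ] EuclideanSpace ℝ (Fin n))|⁻¹ *
          ∫ ξ : EuclideanSpace ℝ (Fin n), b ξ ξ ^ (2 * m) * ‖fourierL b ⇑f ξ‖ ^ 2) ∧
      (∫ x : EuclideanSpace ℝ (Fin n), ‖(bLap B)^[m] ⇑f x‖ ^ 2 =
        (2 * Real.pi) ^ (4 * m) *
          |LinearMap.det (B : EuclideanSpace ℝ (Fin n) →ₗ[ℝ] EuclideanSpace ℝ (Fin n))|⁻¹ *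
          ∫ ξ : EuclideanSpace ℝ (Fin n), b ξ ξ ^ (2 * m) * ‖fourierR b ⇑f ξ‖ ^ 2) := by
  have hdet : |LinearMap.det (B : EuclideanSpace ℝ (Fin n) →ₗ[ℝ] EuclideanSpace ℝ (Fin n))| ≠ 0 :=
    abs_ne_zero.2 B.isUnit_det'.ne_zero
  rw [integral_pow_mul_norm_sq_fourierL hpair, integral_pow_mul_norm_sq_fourierR hpair,
    integral_norm_sq_iterate_bLap, mul_assoc, inv_mul_cancel_left₀ hdet]
  exact ⟨rfl, rfl⟩

/-- `∫ |(Δ_b^m f)(x)|² dx = (2π)^{4m} |det B|⁻¹ ∫ b(ξ,ξ)^{2m} |(𝓕ᴸ_b f)(ξ)|² dξ`,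
and the same identity with `𝓕ᴿ_b` in place of `𝓕ᴸ_b`. -/
theorem stmt16 {n : ℕ} (hn : 1 ≤ n)
    (b : EuclideanSpace ℝ (Fin n) →ₗ[ℝ] EuclideanSpace ℝ (Fin n) →ₗ[ℝ] ℝ)
    (hb : ∀ x : EuclideanSpace ℝ (Fin n), (∀ y, b x y = 0) → x = 0)
    (B : EuclideanSpace ℝ (Fin n) ≃ₗ[ℝ] EuclideanSpace ℝ (Fin n))
    (hpair : ∀ x y : EuclideanSpace ℝ (Fin n), ⟪x, y⟫ = b x (B y))
    (f : SchwartzMap (EuclideanSpace ℝ (Fin n)) ℂ) (m : ℕ) :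
    (∫ x : EuclideanSpace ℝ (Fin n), ‖(bLap B)^[m] ⇑f x‖ ^ 2 =
        (2 * Real.pi) ^ (4 * m) *
          |LinearMap.det (B : EuclideanSpace ℝ (Fin n) →ₗ[ℝ] EuclideanSpace ℝ (Fin n))|⁻¹ *
          ∫ ξ : EuclideanSpace ℝ (Fin n), b ξ ξ ^ (2 * m) * ‖fourierL b ⇑f ξ‖ ^ 2) ∧
      (∫ x : EuclideanSpace ℝ (Fin n), ‖(bLap B)^[m] ⇑f x‖ ^ 2 =
        (2 * Real.pi) ^ (4 * m) *
          |LinearMap.det (B : EuclideanSpace ℝ (Fin n) →ₗ[ℝ] EuclideanSpace ℝ (Fin n))|⁻¹ *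
          ∫ ξ : EuclideanSpace ℝ (Fin n), b ξ ξ ^ (2 * m) * ‖fourierR b ⇑f ξ‖ ^ 2) :=
  stmt16_general b B hpair f m
end
end

section
/- Let b be a positive definite geometric structure on ℝⁿ with geometric pair (b, B), and let s ∈ (0,1). Then for every f ∈ 𝒮(ℝⁿ) and every x ∈ ℝⁿ the following three (absolutely convergent) integrals are equal: |det B|⁻¹ · ∫_{ℝⁿ} e^{2πi b(ξ,x)} (4π² b(ξ,ξ))^s (𝓕ᴸ_b f)(ξ) dξ = |det B|⁻¹ · ∫_{ℝⁿ} e^{2πi b(x,ξ)} (4π² b(ξ,ξ))^s (𝓕ᴿ_b f)(ξ) dξ = (4π²)^s · ∫_{ℝⁿ} e^{2πi ⟨x,ζ⟩} ⟨ζ, Bζ⟩^s (𝓕 f)(ζ) dζ. (In particular the left and right geometric fractional Laplacians (-Δ_b)^s_L and (-Δ_b)^s_R coincide and are given by the pseudo-differential operator with symbol (4π² ⟨ζ, Bζ⟩)^s.) -/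
/-!
From `⟪x, y⟫ = b x (B y)` we get `b x z = ⟪x, B⁻¹ z⟫`, hence `𝓕ᴿ_b f = 𝓕 f ∘ B⁻¹`,
`b x ξ = ⟪x, B⁻¹ ξ⟫` and `b ξ ξ = ⟪B⁻¹ ξ, B (B⁻¹ ξ)⟫`. So the right integrand is the pull-back
along `B⁻¹` of `ζ ↦ e^{2πi⟪x,ζ⟫} (4π² ⟪ζ, B ζ⟫)^s 𝓕 f ζ`, and the linear change of variables
contributes the factor `|det B|`. This symbol integrand is integrable because
`|⟪ζ, B ζ⟫^s| ≤ ‖B‖^s ‖ζ‖^{2s}` and `𝓕 f` is a Schwartz function.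

The left transform of `b` is, by definition, the right transform of the transposed form
`b.flip`, whose geometric pair is `(b.flip, Bᵀ)`. As `⟪ζ, Bᵀ ζ⟫ = ⟪ζ, B ζ⟫` and `det Bᵀ = det B`,
the left integral reduces to the same symbol integral.
-/

open MeasureTheory Complex
open scoped RealInnerProductSpace FourierTransform SchwartzMap

noncomputable section

section Adjoint

variable {𝕜 E : Type*} [RCLike 𝕜] [NormedAddCommGroup E] [InnerProductSpace 𝕜 E]
  [FiniteDimensional 𝕜 E]

theorem LinearMap.det_adjoint_s18 (A : E →ₗ[𝕜] E) :
    LinearMap.det (LinearMap.adjoint A) = star (LinearMap.det A) := by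
  let v := stdOrthonormalBasis 𝕜 E
  rw [← LinearMap.det_toMatrix v.toBasis, ← LinearMap.det_toMatrix v.toBasis,
    LinearMap.toMatrix_adjoint, Matrix.det_conjTranspose]

def LinearEquiv.adjoint (B : E ≃ₗ[𝕜] E) : E ≃ₗ[𝕜] E :=
  LinearEquiv.ofLinearMap (LinearMap.adjoint (B : E →ₗ[𝕜] E))
    (LinearMap.adjoint (B.symm : E →ₗ[𝕜] E))
    (by rw [← LinearMap.adjoint_comp, B.symm_comp, LinearMap.adjoint_id])
    (by rw [← LinearMap.adjoint_comp, B.comp_symm, LinearMap.adjoint_id])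

theorem LinearEquiv.coe_adjoint (B : E ≃ₗ[𝕜] E) :
    (B.adjoint : E →ₗ[𝕜] E) = LinearMap.adjoint (B : E →ₗ[𝕜] E) :=
  rfl

end Adjoint

section GeometricPair

variable {V : Type*} [NormedAddCommGroup V] [InnerProductSpace ℝ V] [FiniteDimensional ℝ V]

theorem LinearEquiv.det_adjoint_s18 (B : V ≃ₗ[ℝ] V) :
    LinearMap.det (B.adjoint : V →ₗ[ℝ] V) = LinearMap.det (B : V →ₗ[ℝ] V) := by
  rw [B.coe_adjoint, LinearMap.det_adjoint_s18, star_trivial]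

theorem LinearEquiv.inner_adjoint_self (B : V ≃ₗ[ℝ] V) (ζ : V) :
    ⟪ζ, B.adjoint ζ⟫ = ⟪ζ, B ζ⟫ := by
  rw [← LinearEquiv.coe_coe, B.coe_adjoint, LinearMap.adjoint_inner_right, real_inner_comm,
    LinearEquiv.coe_coe]

variable {b : V →ₗ[ℝ] V →ₗ[ℝ] ℝ} {B : V ≃ₗ[ℝ] V}

omit [FiniteDimensional ℝ V] in
theorem apply_eq_inner_symm_of_inner_eq (hpair : ∀ x y, ⟪x, y⟫ = b x (B y)) (x z : V) :
    b x z = ⟪x, B.symm z⟫ := by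
  simpa using (hpair x (B.symm z)).symm

theorem inner_eq_flip_apply_adjoint_of_inner_eq (hpair : ∀ x y, ⟪x, y⟫ = b x (B y)) (x y : V) :
    ⟪x, y⟫ = b.flip x (B.adjoint y) := by
  rw [LinearMap.flip_apply, apply_eq_inner_symm_of_inner_eq hpair, ← LinearEquiv.coe_coe,
    B.coe_adjoint, LinearMap.adjoint_inner_left, LinearEquiv.coe_coe, B.apply_symm_apply,
    real_inner_comm]

end GeometricPair

section ChangeOfVariables

variable {E F : Type*} [NormedAddCommGroup E] [NormedSpace ℝ E] [MeasurableSpace E]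
  [BorelSpace E] [FiniteDimensional ℝ E] (μ : Measure E) [μ.IsAddHaarMeasure]
  [NormedAddCommGroup F]

theorem MeasureTheory.Measure.map_linearEquiv_addHaar (L : E ≃ₗ[ℝ] E) :
    μ.map L = ENNReal.ofReal |LinearMap.det (L : E →ₗ[ℝ] E)|⁻¹ • μ := by
  simpa [abs_inv] using μ.map_linearMap_addHaar_eq_smul_addHaar L.isUnit_det'.ne_zero

theorem MeasureTheory.Measure.integral_comp_linearEquiv [NormedSpace ℝ F] (L : E ≃ₗ[ℝ] E)
    (g : E → F) : ∫ x, g (L x) ∂μ = |LinearMap.det (L : E →ₗ[ℝ] E)|⁻¹ • ∫ y, g y ∂μ := by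
  calc ∫ x, g (L x) ∂μ = ∫ y, g y ∂(μ.map L) :=
        (L.toContinuousLinearEquiv.toHomeomorph.measurableEmbedding.integral_map g).symm
    _ = _ := by
      rw [μ.map_linearEquiv_addHaar, integral_smul_measure,
        ENNReal.toReal_ofReal (by positivity)]

theorem MeasureTheory.Integrable.comp_linearEquiv {g : E → F} (hg : Integrable g μ)
    (L : E ≃ₗ[ℝ] E) : Integrable (fun x => g (L x)) μ := by
  refine Integrable.comp_measurable ?_ L.toContinuousLinearEquiv.continuous.measurable
  rw [μ.map_linearEquiv_addHaar]
  exact hg.smul_measure ENNReal.ofReal_ne_top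

end ChangeOfVariables

theorem SchwartzMap.integrable_rpow_mul {D F : Type*} [NormedAddCommGroup D] [NormedSpace ℝ D]
    [MeasurableSpace D] [BorelSpace D] [SecondCountableTopology D] [NormedAddCommGroup F]
    [NormedSpace ℝ F] (μ : Measure D) [μ.HasTemperateGrowth] (φ : 𝓢(D, F)) {r : ℝ}
    (hr : 0 ≤ r) : Integrable (fun x => ‖x‖ ^ r * ‖φ x‖) μ := by
  refine ((φ.integrable.norm.add (φ.integrable_pow_mul μ ⌈r⌉₊)).mono' (by fun_prop)
    (Filter.Eventually.of_forall fun x => ?_))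
  have hx : ‖x‖ ^ r ≤ 1 + ‖x‖ ^ ⌈r⌉₊ := by
    rcases le_or_gt ‖x‖ 1 with h | h
    · linarith [Real.rpow_le_one (norm_nonneg x) h hr, pow_nonneg (norm_nonneg x) ⌈r⌉₊]
    · rw [← Real.rpow_natCast]
      linarith [Real.rpow_le_rpow_of_exponent_le h.le (Nat.le_ceil r)]
  rw [Real.norm_eq_abs, abs_of_nonneg (by positivity), Pi.add_apply]
  nlinarith [norm_nonneg (φ x)]

theorem SchwartzMap.integrable_exp_inner_mul_rpow_inner_mul {V : Type*} [NormedAddCommGroup V]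
    [InnerProductSpace ℝ V] [MeasurableSpace V] [BorelSpace V] [SecondCountableTopology V]
    (μ : Measure V) [μ.HasTemperateGrowth] (φ : 𝓢(V, ℂ)) (T : V →L[ℝ] V) {s : ℝ} (hs : 0 ≤ s)
    (x : V) :
    Integrable (fun ζ => Complex.exp ((2 * Real.pi * Complex.I) * (⟪x, ζ⟫ : ℂ)) *
      ((⟪ζ, T ζ⟫ ^ s : ℝ) : ℂ) * φ ζ) μ := by
  have hbound (ζ : V) : |⟪ζ, T ζ⟫ ^ s| ≤ ‖T‖ ^ s * ‖ζ‖ ^ (2 * s) := calc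
    |⟪ζ, T ζ⟫ ^ s| ≤ |⟪ζ, T ζ⟫| ^ s := Real.abs_rpow_le_abs_rpow _ _
    _ ≤ (‖T‖ * ‖ζ‖ ^ 2) ^ s := by
      gcongr
      calc |⟪ζ, T ζ⟫| ≤ ‖ζ‖ * ‖T ζ‖ := abs_real_inner_le_norm _ _
        _ ≤ ‖ζ‖ * (‖T‖ * ‖ζ‖) := by gcongr; exact T.le_opNorm ζ
        _ = ‖T‖ * ‖ζ‖ ^ 2 := by ring
    _ = ‖T‖ ^ s * ‖ζ‖ ^ (2 * s) := by
      rw [Real.mul_rpow (norm_nonneg _) (by positivity), Real.rpow_mul (norm_nonneg _),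
        Real.rpow_two]
  have hsymbol : Integrable (fun ζ => ((⟪ζ, T ζ⟫ ^ s : ℝ) : ℂ) * φ ζ) μ := by
    refine (((φ.integrable_rpow_mul μ (by positivity : 0 ≤ 2 * s)).const_mul
      (‖T‖ ^ s)).mono' (by fun_prop) (Filter.Eventually.of_forall fun ζ => ?_))
    rw [norm_mul, Complex.norm_real, Real.norm_eq_abs, ← mul_assoc]
    gcongr
    exact hbound ζ
  refine (hsymbol.bdd_mul (c := 1) (by fun_prop) (Filter.Eventually.of_forall fun ζ => ?_)).congr
    (Filter.Eventually.of_forall fun ζ => (mul_assoc _ _ _).symm)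
  rw [Complex.norm_exp]
  simp

section GeometricFourier

variable {n : ℕ}

local notation "Eu" => EuclideanSpace ℝ (Fin n)

theorem fourierR_eq_fourier_comp_s18 (b : Eu →ₗ[ℝ] Eu →ₗ[ℝ] ℝ) (A : Eu →ₗ[ℝ] Eu)
    (hA : ∀ x z, b x z = ⟪x, A z⟫) (f : Eu → ℂ) (ξ : Eu) :
    fourierR b f ξ = 𝓕 f (A ξ) := by
  rw [Real.fourier_eq']
  refine integral_congr_ae (Filter.Eventually.of_forall fun v => ?_)
  simp only [hA, smul_eq_mul]
  push_cast
  ring_nf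

theorem fourierR_symbol_eq (b : Eu →ₗ[ℝ] Eu →ₗ[ℝ] ℝ) (B : Eu ≃ₗ[ℝ] Eu)
    (hpair : ∀ x y, ⟪x, y⟫ = b x (B y)) (hb : ∀ ξ, 0 ≤ b ξ ξ) (s : ℝ) (f : Eu → ℂ) (x : Eu) :
    (fun ξ => Complex.exp ((2 * Real.pi * Complex.I) * (b x ξ : ℂ)) *
        (((4 * Real.pi ^ 2 * b ξ ξ) ^ s : ℝ) : ℂ) * fourierR b f ξ) =
      fun ξ => (((4 * Real.pi ^ 2) ^ s : ℝ) : ℂ) *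
        (Complex.exp ((2 * Real.pi * Complex.I) * (⟪x, B.symm ξ⟫ : ℂ)) *
          ((⟪B.symm ξ, B (B.symm ξ)⟫ ^ s : ℝ) : ℂ) * 𝓕 f (B.symm ξ)) := by
  have hA := apply_eq_inner_symm_of_inner_eq hpair
  funext ξ
  rw [fourierR_eq_fourier_comp_s18 b B.symm hA, Real.mul_rpow (by positivity) (hb ξ),
    B.apply_symm_apply, real_inner_comm ξ (B.symm ξ), ← hA ξ ξ, hA x ξ]
  push_cast
  ring

theorem integrable_fourier_symbol (B : Eu →ₗ[ℝ] Eu) {s : ℝ} (hs : 0 ≤ s) (f : 𝓢(Eu, ℂ))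
    (x : Eu) :
    Integrable (fun ζ => Complex.exp ((2 * Real.pi * Complex.I) * (⟪x, ζ⟫ : ℂ)) *
      ((⟪ζ, B ζ⟫ ^ s : ℝ) : ℂ) * 𝓕 (f : Eu → ℂ) ζ) := by
  simpa only [SchwartzMap.fourier_coe] using
    (𝓕 f).integrable_exp_inner_mul_rpow_inner_mul volume B.toContinuousLinearMap hs x

theorem integrable_fourierR_symbol (b : Eu →ₗ[ℝ] Eu →ₗ[ℝ] ℝ) (B : Eu ≃ₗ[ℝ] Eu)
    (hpair : ∀ x y, ⟪x, y⟫ = b x (B y)) (hb : ∀ ξ, 0 ≤ b ξ ξ) {s : ℝ} (hs : 0 ≤ s)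
    (f : 𝓢(Eu, ℂ)) (x : Eu) :
    Integrable (fun ξ => Complex.exp ((2 * Real.pi * Complex.I) * (b x ξ : ℂ)) *
        (((4 * Real.pi ^ 2 * b ξ ξ) ^ s : ℝ) : ℂ) * fourierR b f ξ) := by
  rw [fourierR_symbol_eq b B hpair hb]
  exact ((integrable_fourier_symbol B.toLinearMap hs f x).const_mul _).comp_linearEquiv
    volume B.symm

theorem integral_fourierR_symbol (b : Eu →ₗ[ℝ] Eu →ₗ[ℝ] ℝ) (B : Eu ≃ₗ[ℝ] Eu)
    (hpair : ∀ x y, ⟪x, y⟫ = b x (B y)) (hb : ∀ ξ, 0 ≤ b ξ ξ) (s : ℝ) (f : Eu → ℂ) (x : Eu) :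
    ((|LinearMap.det (B : Eu →ₗ[ℝ] Eu)|⁻¹ : ℝ) : ℂ) *
        ∫ ξ, Complex.exp ((2 * Real.pi * Complex.I) * (b x ξ : ℂ)) *
          (((4 * Real.pi ^ 2 * b ξ ξ) ^ s : ℝ) : ℂ) * fourierR b f ξ =
      (((4 * Real.pi ^ 2) ^ s : ℝ) : ℂ) *
        ∫ ζ, Complex.exp ((2 * Real.pi * Complex.I) * (⟪x, ζ⟫ : ℂ)) *
          ((⟪ζ, B ζ⟫ ^ s : ℝ) : ℂ) * 𝓕 f ζ := by
  have hdet : LinearMap.det (B : Eu →ₗ[ℝ] Eu) ≠ 0 := B.isUnit_det'.ne_zero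
  rw [fourierR_symbol_eq b B hpair hb, volume.integral_comp_linearEquiv B.symm
    (fun ζ => (((4 * Real.pi ^ 2) ^ s : ℝ) : ℂ) * (Complex.exp ((2 * Real.pi * Complex.I) *
      (⟪x, ζ⟫ : ℂ)) * ((⟪ζ, B ζ⟫ ^ s : ℝ) : ℂ) * 𝓕 f ζ)), integral_const_mul,
    LinearEquiv.det_coe_symm, abs_inv, inv_inv, Complex.real_smul, ← mul_assoc,
    ← Complex.ofReal_mul, inv_mul_cancel₀ (abs_ne_zero.2 hdet), Complex.ofReal_one, one_mul]

end GeometricFourier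

theorem stmt18_general {n : ℕ}
    (b : EuclideanSpace ℝ (Fin n) →ₗ[ℝ] EuclideanSpace ℝ (Fin n) →ₗ[ℝ] ℝ)
    (hpos : ∀ x : EuclideanSpace ℝ (Fin n), x ≠ 0 → 0 < b x x)
    (B : EuclideanSpace ℝ (Fin n) ≃ₗ[ℝ] EuclideanSpace ℝ (Fin n))
    (hpair : ∀ x y : EuclideanSpace ℝ (Fin n), ⟪x, y⟫ = b x (B y))
    (s : ℝ) (hs : s ∈ Set.Ioo (0 : ℝ) 1)
    (f : SchwartzMap (EuclideanSpace ℝ (Fin n)) ℂ) (x : EuclideanSpace ℝ (Fin n)) :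
    Integrable (fun ξ : EuclideanSpace ℝ (Fin n) =>
      Complex.exp ((2 * Real.pi * Complex.I) * (b ξ x : ℂ)) *
        (((4 * Real.pi ^ 2 * b ξ ξ) ^ s : ℝ) : ℂ) * fourierL b ⇑f ξ) ∧
    Integrable (fun ξ : EuclideanSpace ℝ (Fin n) =>
      Complex.exp ((2 * Real.pi * Complex.I) * (b x ξ : ℂ)) *
        (((4 * Real.pi ^ 2 * b ξ ξ) ^ s : ℝ) : ℂ) * fourierR b ⇑f ξ) ∧
    Integrable (fun ζ : EuclideanSpace ℝ (Fin n) =>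
      Complex.exp ((2 * Real.pi * Complex.I) * (⟪x, ζ⟫ : ℂ)) *
        (((⟪ζ, B ζ⟫ ^ s : ℝ)) : ℂ) * FourierTransform.fourier (⇑f : EuclideanSpace ℝ (Fin n) → ℂ) ζ) ∧
    (((|LinearMap.det (B : EuclideanSpace ℝ (Fin n) →ₗ[ℝ] EuclideanSpace ℝ (Fin n))|⁻¹ : ℝ) : ℂ) *
        ∫ ξ : EuclideanSpace ℝ (Fin n),
          Complex.exp ((2 * Real.pi * Complex.I) * (b ξ x : ℂ)) *
            (((4 * Real.pi ^ 2 * b ξ ξ) ^ s : ℝ) : ℂ) * fourierL b ⇑f ξ =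
      ((|LinearMap.det (B : EuclideanSpace ℝ (Fin n) →ₗ[ℝ] EuclideanSpace ℝ (Fin n))|⁻¹ : ℝ) : ℂ) *
        ∫ ξ : EuclideanSpace ℝ (Fin n),
          Complex.exp ((2 * Real.pi * Complex.I) * (b x ξ : ℂ)) *
            (((4 * Real.pi ^ 2 * b ξ ξ) ^ s : ℝ) : ℂ) * fourierR b ⇑f ξ) ∧
    (((|LinearMap.det (B : EuclideanSpace ℝ (Fin n) →ₗ[ℝ] EuclideanSpace ℝ (Fin n))|⁻¹ : ℝ) : ℂ) *
        ∫ ξ : EuclideanSpace ℝ (Fin n),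
          Complex.exp ((2 * Real.pi * Complex.I) * (b x ξ : ℂ)) *
            (((4 * Real.pi ^ 2 * b ξ ξ) ^ s : ℝ) : ℂ) * fourierR b ⇑f ξ =
      ((((4 * Real.pi ^ 2) ^ s : ℝ)) : ℂ) *
        ∫ ζ : EuclideanSpace ℝ (Fin n),
          Complex.exp ((2 * Real.pi * Complex.I) * (⟪x, ζ⟫ : ℂ)) *
            (((⟪ζ, B ζ⟫ ^ s : ℝ)) : ℂ) * FourierTransform.fourier (⇑f : EuclideanSpace ℝ (Fin n) → ℂ) ζ) := by
  have hb (ξ : EuclideanSpace ℝ (Fin n)) : 0 ≤ b ξ ξ := by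
    rcases eq_or_ne ξ 0 with rfl | hξ
    · simp
    · exact (hpos ξ hξ).le
  have hpair' := inner_eq_flip_apply_adjoint_of_inner_eq hpair
  have hleft := integral_fourierR_symbol b.flip B.adjoint hpair' hb s f x
  simp only [B.inner_adjoint_self, B.det_adjoint_s18] at hleft
  have hright := integral_fourierR_symbol b B hpair hb s f x
  exact ⟨integrable_fourierR_symbol b.flip B.adjoint hpair' hb hs.1.le f x,
    integrable_fourierR_symbol b B hpair hb hs.1.le f x,
    integrable_fourier_symbol B.toLinearMap hs.1.le f x,
    hleft.trans hright.symm, hright⟩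

/-- for a positive definite geometric structure `b` and `s ∈ (0,1)`,
the three absolutely convergent integrals defining the left and right geometric fractional
Laplacians and the pseudo-differential operator with symbol `(4π²⟨ζ,Bζ⟩)^s` coincide:
`|det B|⁻¹ ∫ e^{2πi b(ξ,x)} (4π² b(ξ,ξ))^s (𝓕ᴸ_b f)(ξ) dξ
  = |det B|⁻¹ ∫ e^{2πi b(x,ξ)} (4π² b(ξ,ξ))^s (𝓕ᴿ_b f)(ξ) dξ
  = (4π²)^s ∫ e^{2πi⟨x,ζ⟩} ⟨ζ,Bζ⟩^s (𝓕f)(ζ) dζ`. -/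
theorem stmt18 {n : ℕ} (hn : 1 ≤ n)
    (b : EuclideanSpace ℝ (Fin n) →ₗ[ℝ] EuclideanSpace ℝ (Fin n) →ₗ[ℝ] ℝ)
    (hb : ∀ x : EuclideanSpace ℝ (Fin n), (∀ y, b x y = 0) → x = 0)
    (hpos : ∀ x : EuclideanSpace ℝ (Fin n), x ≠ 0 → 0 < b x x)
    (B : EuclideanSpace ℝ (Fin n) ≃ₗ[ℝ] EuclideanSpace ℝ (Fin n))
    (hpair : ∀ x y : EuclideanSpace ℝ (Fin n), ⟪x, y⟫ = b x (B y))
    (s : ℝ) (hs : s ∈ Set.Ioo (0 : ℝ) 1)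
    (f : SchwartzMap (EuclideanSpace ℝ (Fin n)) ℂ) (x : EuclideanSpace ℝ (Fin n)) :
    Integrable (fun ξ : EuclideanSpace ℝ (Fin n) =>
      Complex.exp ((2 * Real.pi * Complex.I) * (b ξ x : ℂ)) *
        (((4 * Real.pi ^ 2 * b ξ ξ) ^ s : ℝ) : ℂ) * fourierL b ⇑f ξ) ∧
    Integrable (fun ξ : EuclideanSpace ℝ (Fin n) =>
      Complex.exp ((2 * Real.pi * Complex.I) * (b x ξ : ℂ)) *
        (((4 * Real.pi ^ 2 * b ξ ξ) ^ s : ℝ) : ℂ) * fourierR b ⇑f ξ) ∧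
    Integrable (fun ζ : EuclideanSpace ℝ (Fin n) =>
      Complex.exp ((2 * Real.pi * Complex.I) * (⟪x, ζ⟫ : ℂ)) *
        (((⟪ζ, B ζ⟫ ^ s : ℝ)) : ℂ) * FourierTransform.fourier (⇑f : EuclideanSpace ℝ (Fin n) → ℂ) ζ) ∧
    (((|LinearMap.det (B : EuclideanSpace ℝ (Fin n) →ₗ[ℝ] EuclideanSpace ℝ (Fin n))|⁻¹ : ℝ) : ℂ) *
        ∫ ξ : EuclideanSpace ℝ (Fin n),
          Complex.exp ((2 * Real.pi * Complex.I) * (b ξ x : ℂ)) *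
            (((4 * Real.pi ^ 2 * b ξ ξ) ^ s : ℝ) : ℂ) * fourierL b ⇑f ξ =
      ((|LinearMap.det (B : EuclideanSpace ℝ (Fin n) →ₗ[ℝ] EuclideanSpace ℝ (Fin n))|⁻¹ : ℝ) : ℂ) *
        ∫ ξ : EuclideanSpace ℝ (Fin n),
          Complex.exp ((2 * Real.pi * Complex.I) * (b x ξ : ℂ)) *
            (((4 * Real.pi ^ 2 * b ξ ξ) ^ s : ℝ) : ℂ) * fourierR b ⇑f ξ) ∧
    (((|LinearMap.det (B : EuclideanSpace ℝ (Fin n) →ₗ[ℝ] EuclideanSpace ℝ (Fin n))|⁻¹ : ℝ) : ℂ) *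
        ∫ ξ : EuclideanSpace ℝ (Fin n),
          Complex.exp ((2 * Real.pi * Complex.I) * (b x ξ : ℂ)) *
            (((4 * Real.pi ^ 2 * b ξ ξ) ^ s : ℝ) : ℂ) * fourierR b ⇑f ξ =
      ((((4 * Real.pi ^ 2) ^ s : ℝ)) : ℂ) *
        ∫ ζ : EuclideanSpace ℝ (Fin n),
          Complex.exp ((2 * Real.pi * Complex.I) * (⟪x, ζ⟫ : ℂ)) *
            (((⟪ζ, B ζ⟫ ^ s : ℝ)) : ℂ) * FourierTransform.fourier (⇑f : EuclideanSpace ℝ (Fin n) → ℂ) ζ) :=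
  stmt18_general b hpos B hpair s hs f x
end
end
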